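/- For every positive integer k, the graph XI_{2k} satisfies χ'_irr(XI_{2k}) = 2, i.e., it admits a locally irregular edge-coloring using 2 colors but not one using 1 color. -/

import Mathlib

/-- A graph is *locally irregular* if no two adjacent vertices have the same degree. -/
def LocallyIrregular {V : Type*} (G : SimpleGraph V) : Prop :=
  ∀ ⦃u v : V⦄, G.Adj u v → (G.neighborSet u).ncard ≠ (G.neighborSet v).ncard

/-- `HasLIEC G k` : `G` admits a locally irregular edge-coloring using at most `k` colors,
i.e. an assignment of one of `k` colors to every edge such that the edges of each fixed
color induce a locally irregular graph. -/
def HasLIEC {V : Type*} (G : SimpleGraph V) (k : ℕ) : Prop :=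
  ∃ c : Sym2 V → Fin k, ∀ i : Fin k,
    LocallyIrregular (SimpleGraph.fromEdgeSet {e | e ∈ G.edgeSet ∧ c e = i})

/-- The graph `XI n` : two disjoint cycles of length `3n` (the `inl` vertices `v_a` and the
`inr` vertices `u_a`, `a ∈ ZMod (3n)`), together with the edges `v_{3i} u_{3i+1}`,
`v_{3i+1} u_{3i}` and `v_{3i+2} u_{3i+2}` for all multiples `3i` modulo `3n`. -/
def XI (n : ℕ) : SimpleGraph (ZMod (3 * n) ⊕ ZMod (3 * n)) :=
  SimpleGraph.fromRel (fun x y =>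
    match x, y with
    | Sum.inl a, Sum.inl b => a - b = 1
    | Sum.inr a, Sum.inr b => a - b = 1
    | Sum.inl a, Sum.inr b =>
        ∃ i : ZMod (3 * n),
          (a = 3 * i ∧ b = 3 * i + 1) ∨ (a = 3 * i + 1 ∧ b = 3 * i) ∨
            (a = 3 * i + 2 ∧ b = 3 * i + 2)
    | Sum.inr _, Sum.inl _ => False)

/-!
Reduction modulo `6` maps `XI (2k)` onto `XI 2` bijectively on every neighbourhood, so pulling
back an edge-colouring along it preserves the degree of every vertex in every colour class. Hence
the locally irregular 2-edge-colouring of the 12-vertex graph `XI 2`, checked by computation,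
lifts to `XI (2k)`. One colour is not enough because `XI n` is cubic.
-/

open SimpleGraph Set

variable {V W α : Type*}

def colorClass (G : SimpleGraph V) (c : Sym2 V → α) (i : α) : SimpleGraph V :=
  fromEdgeSet {e | e ∈ G.edgeSet ∧ c e = i}

section colorClass

variable {G : SimpleGraph V} {c : Sym2 V → α} {i : α}

theorem colorClass_adj {u v : V} : (colorClass G c i).Adj u v ↔ G.Adj u v ∧ c s(u, v) = i := by
  simp only [colorClass, fromEdgeSet_adj, mem_ofPred_eq, mem_edgeSet, and_iff_left_iff_imp]
  exact fun h => h.1.ne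

theorem neighborSet_colorClass (v : V) :
    (colorClass G c i).neighborSet v = {w ∈ G.neighborSet v | c s(v, w) = i} :=
  ext fun _ => colorClass_adj

theorem colorClass_of_subsingleton [Subsingleton α] : colorClass G c i = G := by
  ext u v
  exact colorClass_adj.trans (and_iff_left (Subsingleton.elim _ _))

theorem locallyIrregular_colorClass_of_finset [DecidableEq V] [DecidableEq α] (N : V → Finset V)
    (hN : ∀ v, G.neighborSet v = N v)
    (h : ∀ v, ∀ w ∈ N v, c s(v, w) = i →
      ((N v).filter (c s(v, ·) = i)).card ≠ ((N w).filter (c s(w, ·) = i)).card) :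
    LocallyIrregular (colorClass G c i) := by
  intro u v huv
  rw [colorClass_adj, ← mem_neighborSet, hN] at huv
  have hcard : ∀ x, {w ∈ (N x : Set V) | c s(x, w) = i}.ncard =
      ((N x).filter (c s(x, ·) = i)).card :=
    fun x => by rw [← ncard_coe_finset, Finset.coe_filter]; rfl
  rw [neighborSet_colorClass, neighborSet_colorClass, hN, hN, hcard, hcard]
  exact h u v huv.1 huv.2

end colorClass

theorem hasLIEC_iff {G : SimpleGraph V} {k : ℕ} :
    HasLIEC G k ↔ ∃ c : Sym2 V → Fin k, ∀ i, LocallyIrregular (colorClass G c i) :=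
  Iff.rfl

theorem HasLIEC.locallyIrregular {G : SimpleGraph V} (h : HasLIEC G 1) : LocallyIrregular G := by
  obtain ⟨c, hc⟩ := hasLIEC_iff.mp h
  simpa only [colorClass_of_subsingleton] using hc 0

theorem HasLIEC.of_bijOn_neighborSet {G : SimpleGraph V} {H : SimpleGraph W} {k : ℕ} (f : V → W)
    (hf : ∀ v, BijOn f (G.neighborSet v) (H.neighborSet (f v))) (h : HasLIEC H k) :
    HasLIEC G k := by
  obtain ⟨c, hc⟩ := hasLIEC_iff.mp h
  refine hasLIEC_iff.mpr ⟨c ∘ Sym2.map f, fun i => ?_⟩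
  have hbij : ∀ v, BijOn f ((colorClass G (c ∘ Sym2.map f) i).neighborSet v)
      ((colorClass H c i).neighborSet (f v)) := fun v => by
    rw [neighborSet_colorClass, neighborSet_colorClass]
    exact (hf v).inter_mapsTo (s₂ := f ⁻¹' {z | c s(f v, z) = i}) (mapsTo_preimage _ _)
      fun _ h => h.2
  intro u v huv
  rw [(hbij u).ncard_eq, (hbij v).ncard_eq]
  exact hc i ((hbij u).mapsTo huv)

namespace XI

variable {n m : ℕ}

theorem natCast_ne_zero_of_lt_three {m : ℕ} (h0 : m ≠ 0) (h3 : m < 3) :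
    (m : ZMod (3 * n)) ≠ 0 := by
  rw [Ne, ZMod.natCast_eq_zero_iff]
  intro h
  rcases Nat.eq_zero_or_pos n with rfl | hn
  · exact h0 (Nat.eq_zero_of_zero_dvd h)
  · exact absurd (Nat.le_of_dvd (Nat.pos_of_ne_zero h0) h) (by omega)

theorem exists_eq_three_mul_add (a : ZMod (3 * n)) :
    ∃ i, a = 3 * i ∨ a = 3 * i + 1 ∨ a = 3 * i + 2 := by
  obtain ⟨z, rfl⟩ := ZMod.intCast_surjective a
  obtain ⟨q, r, hr, rfl⟩ : ∃ q r : ℤ, (r = 0 ∨ r = 1 ∨ r = 2) ∧ z = 3 * q + r :=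
    ⟨z / 3, z % 3, by omega, by omega⟩
  refine ⟨q, ?_⟩
  rcases hr with rfl | rfl | rfl <;> push_cast <;> simp

def residue (n : ℕ) : ZMod (3 * n) →+* ZMod 3 := ZMod.castHom (dvd_mul_right 3 n) (ZMod 3)

def partner (a : ZMod (3 * n)) : ZMod (3 * n) :=
  if residue n a = 0 then a + 1 else if residue n a = 1 then a - 1 else a

theorem residue_three_mul_add (i : ZMod (3 * n)) (r : ℕ) : residue n (3 * i + r) = r := by
  rw [map_add, map_mul, map_ofNat, map_natCast, show (3 : ZMod 3) = 0 from rfl, zero_mul,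
    zero_add]

theorem partner_three_mul (i : ZMod (3 * n)) : partner (3 * i) = 3 * i + 1 := by
  have h := residue_three_mul_add i 0
  simp only [Nat.cast_zero, add_zero] at h
  rw [partner, if_pos h]

theorem partner_three_mul_add_one (i : ZMod (3 * n)) : partner (3 * i + 1) = 3 * i := by
  have h := residue_three_mul_add i 1
  simp only [Nat.cast_one] at h
  rw [partner, h, if_neg (by decide), if_pos rfl, add_sub_cancel_right]

theorem partner_three_mul_add_two (i : ZMod (3 * n)) : partner (3 * i + 2) = 3 * i + 2 := by
  have h := residue_three_mul_add i 2
  simp only [Nat.cast_ofNat] at h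
  rw [partner, h, if_neg (by decide), if_neg (by decide)]

theorem partner_involutive : Function.Involutive (partner (n := n)) := by
  intro a
  obtain ⟨i, rfl | rfl | rfl⟩ := exists_eq_three_mul_add a <;>
    simp only [partner_three_mul, partner_three_mul_add_one, partner_three_mul_add_two]

theorem adj_inl_inr_iff {a b : ZMod (3 * n)} :
    (XI n).Adj (.inl a) (.inr b) ↔ b = partner a := by
  simp only [XI, fromRel_adj, ne_eq, reduceCtorEq, not_false_eq_true, true_and, or_false]
  constructor
  · rintro ⟨i, ⟨rfl, rfl⟩ | ⟨rfl, rfl⟩ | ⟨rfl, rfl⟩⟩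
    exacts [(partner_three_mul i).symm, (partner_three_mul_add_one i).symm,
      (partner_three_mul_add_two i).symm]
  · rintro rfl
    obtain ⟨i, rfl | rfl | rfl⟩ := exists_eq_three_mul_add a
    · exact ⟨i, .inl ⟨rfl, partner_three_mul i⟩⟩
    · exact ⟨i, .inr (.inl ⟨rfl, partner_three_mul_add_one i⟩)⟩
    · exact ⟨i, .inr (.inr ⟨rfl, partner_three_mul_add_two i⟩)⟩

theorem adj_inr_inl_iff {a b : ZMod (3 * n)} :
    (XI n).Adj (.inr a) (.inl b) ↔ b = partner a := by
  rw [adj_comm, adj_inl_inr_iff]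
  exact partner_involutive.eq_iff.symm.trans eq_comm

theorem cycle_adj_iff {a b : ZMod (3 * n)} :
    (a ≠ b ∧ (a - b = 1 ∨ b - a = 1)) ↔ b = a + 1 ∨ b = a - 1 := by
  have h1 : (1 : ZMod (3 * n)) ≠ 0 := by
    exact_mod_cast natCast_ne_zero_of_lt_three one_ne_zero (by norm_num)
  constructor
  · rintro ⟨-, h | h⟩
    exacts [.inr (by linear_combination -h), .inl (by linear_combination h)]
  · rintro (rfl | rfl)
    · exact ⟨fun h => h1 (by linear_combination -h), .inr (by ring)⟩
    · exact ⟨fun h => h1 (by linear_combination h), .inl (by ring)⟩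

theorem adj_inl_inl_iff {a b : ZMod (3 * n)} :
    (XI n).Adj (.inl a) (.inl b) ↔ b = a + 1 ∨ b = a - 1 := by
  simp only [XI, fromRel_adj, ne_eq, Sum.inl.injEq]
  exact cycle_adj_iff

theorem adj_inr_inr_iff {a b : ZMod (3 * n)} :
    (XI n).Adj (.inr a) (.inr b) ↔ b = a + 1 ∨ b = a - 1 := by
  simp only [XI, fromRel_adj, ne_eq, Sum.inr.injEq]
  exact cycle_adj_iff

def nbrs : ZMod (3 * n) ⊕ ZMod (3 * n) → Finset (ZMod (3 * n) ⊕ ZMod (3 * n))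
  | .inl a => {.inl (a + 1), .inl (a - 1), .inr (partner a)}
  | .inr a => {.inr (a + 1), .inr (a - 1), .inl (partner a)}

theorem neighborSet_eq_nbrs (v : ZMod (3 * n) ⊕ ZMod (3 * n)) :
    (XI n).neighborSet v = nbrs v := by
  ext (b | b) <;> rcases v with a | a <;>
    simp [nbrs, adj_inl_inl_iff, adj_inl_inr_iff, adj_inr_inl_iff, adj_inr_inr_iff, or_comm]

theorem card_nbrs (v : ZMod (3 * n) ⊕ ZMod (3 * n)) : (nbrs v).card = 3 := by
  have h2 : (2 : ZMod (3 * n)) ≠ 0 := by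
    exact_mod_cast natCast_ne_zero_of_lt_three two_ne_zero (by norm_num)
  have hne : ∀ a : ZMod (3 * n), a + 1 ≠ a - 1 := fun a h => h2 (by linear_combination h)
  rcases v with a | a <;> simp [nbrs, hne]

theorem ncard_neighborSet (v : ZMod (3 * n) ⊕ ZMod (3 * n)) :
    ((XI n).neighborSet v).ncard = 3 := by
  rw [neighborSet_eq_nbrs, ncard_coe_finset, card_nbrs]

theorem not_hasLIEC_one (n : ℕ) : ¬ HasLIEC (XI n) 1 := fun h =>
  h.locallyIrregular (adj_inl_inl_iff.mpr (.inl rfl) : (XI n).Adj (.inl 0) (.inl (0 + 1)))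
    (by rw [ncard_neighborSet, ncard_neighborSet])

theorem partner_map (φ : ZMod (3 * n) →+* ZMod (3 * m)) (a : ZMod (3 * n)) :
    partner (φ a) = φ (partner a) := by
  have hres : residue m (φ a) = residue n a := by
    rw [← RingHom.comp_apply, RingHom.ext_zmod ((residue m).comp φ) (residue n)]
  unfold partner
  rw [hres]
  split_ifs <;> simp only [map_add, map_sub, map_one]

theorem image_nbrs (φ : ZMod (3 * n) →+* ZMod (3 * m)) (v : ZMod (3 * n) ⊕ ZMod (3 * n)) :
    (nbrs v).image (Sum.map φ φ) = nbrs (Sum.map φ φ v) := by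
  rcases v with a | a <;> simp [nbrs, partner_map, Finset.image_insert]

theorem bijOn_neighborSet_map (φ : ZMod (3 * n) →+* ZMod (3 * m))
    (v : ZMod (3 * n) ⊕ ZMod (3 * n)) :
    BijOn (Sum.map φ φ) ((XI n).neighborSet v) ((XI m).neighborSet (Sum.map φ φ v)) := by
  have hinj : InjOn (Sum.map φ φ) (nbrs v) :=
    Finset.injOn_of_card_image_eq (by rw [image_nbrs, card_nbrs, card_nbrs])
  rw [neighborSet_eq_nbrs, neighborSet_eq_nbrs, ← image_nbrs, Finset.coe_image]
  exact hinj.bijOn_image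

theorem hasLIEC_of_ringHom {k : ℕ} (φ : ZMod (3 * n) →+* ZMod (3 * m)) (h : HasLIEC (XI m) k) :
    HasLIEC (XI n) k :=
  h.of_bijOn_neighborSet _ (bijOn_neighborSet_map φ)

/-- Colour `1` goes to the edges `u_a u_(a+1)` with `a ≢ 0 (mod 3)` and to the rungs at odd
`v_a`. -/
def twoColoring (e : Sym2 (ZMod (3 * 2) ⊕ ZMod (3 * 2))) : Fin 2 :=
  if e ∈ ({s(.inr 1, .inr 2), s(.inr 2, .inr 3), s(.inr 4, .inr 5), s(.inr 5, .inr 0),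
    s(.inl 1, .inr 0), s(.inl 3, .inr 4), s(.inl 5, .inr 5)} : Finset _) then 1 else 0

theorem hasLIEC_two : HasLIEC (XI 2) 2 :=
  hasLIEC_iff.mpr ⟨twoColoring, fun i =>
    locallyIrregular_colorClass_of_finset nbrs neighborSet_eq_nbrs (by revert i; decide)⟩

end XI

theorem XI_even_LIEC_general (k : ℕ) :
    HasLIEC (XI (2 * k)) 2 ∧ ¬ HasLIEC (XI (2 * k)) 1 :=
  ⟨XI.hasLIEC_of_ringHom (ZMod.castHom (Nat.mul_dvd_mul_left 3 (dvd_mul_right 2 k)) _)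
    XI.hasLIEC_two, XI.not_hasLIEC_one _⟩

/-- For every positive integer `k`, the graph `XI (2k)` has locally irregular chromatic
index exactly 2. -/
theorem XI_even_LIEC (k : ℕ) (hk : 1 ≤ k) :
    HasLIEC (XI (2 * k)) 2 ∧ ¬ HasLIEC (XI (2 * k)) 1 :=
  XI_even_LIEC_general k
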